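/- arXiv:1904.07824 — 5 statements merged into one kernel-verified Lean document; each statement's English description precedes it below -/
import Mathlib

section
/- The distortion of the boundary of the standard (n+1)-simplex S = {x ∈ ℝ^{n+2} : Σxᵢ = 1, xᵢ ≥ 0} is at least sqrt(2 + 2/n). -/
open Set ENNReal RealInnerProductSpace

noncomputable def intrinsicDist {n : ℕ} (A : Set (EuclideanSpace ℝ (Fin n)))
    (p q : EuclideanSpace ℝ (Fin n)) : ℝ≥0∞ :=
  ⨅ (γ : Path p q) (_ : Set.range γ ⊆ A), eVariationOn (fun t => γ t) Set.univ

noncomputable def distortion {n : ℕ} (A : Set (EuclideanSpace ℝ (Fin n))) : ℝ≥0∞ :=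
  ⨆ p ∈ A, ⨆ q ∈ A, intrinsicDist A p q / edist p q

lemma coord_abs_le_dist {m : ℕ} (x y : EuclideanSpace ℝ (Fin m)) (k : Fin m) :
    |x k - y k| ≤ dist x y := by
  rw [EuclideanSpace.dist_eq, ← Real.sqrt_sq (abs_nonneg (x k - y k)), sq_abs]
  apply Real.sqrt_le_sqrt
  have h : (x k - y k) ^ 2 = dist (x k) (y k) ^ 2 := by rw [Real.dist_eq, sq_abs]
  rw [h]
  exact Finset.single_le_sum (f := fun i => dist (x i) (y i) ^ 2)
    (fun i _ => sq_nonneg _) (Finset.mem_univ k)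

lemma sum3 {n : ℕ} (f : Fin (n + 2) → ℝ) :
    ∑ i, f i = f 0 + f 1 + ∑ i : Fin n, f i.succ.succ := by
  rw [Fin.sum_univ_succ, Fin.sum_univ_succ, ← add_assoc]
  rfl

lemma two_point_var {E : Type*} [PseudoEMetricSpace E] {p q : E} (γ : Path p q)
    (s : unitInterval) :
    edist p (γ s) + edist (γ s) q ≤ eVariationOn (fun t => γ t) Set.univ := by
  have h0s : (0 : unitInterval) ≤ s := Subtype.coe_le_coe.mp (by simpa using s.2.1)
  have hs1 : s ≤ (1 : unitInterval) := Subtype.coe_le_coe.mp (by simpa using s.2.2)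
  have h01 : (0 : unitInterval) ≤ (1 : unitInterval) :=
    Subtype.coe_le_coe.mp (by norm_num)
  have h2 := eVariationOn.sum_le (f := fun t => γ t) (s := (Set.univ : Set unitInterval)) (n := 2)
    (u := fun i => if i = 0 then 0 else if i = 1 then s else 1) ?_ (fun i => trivial)
  · rw [Finset.sum_range_succ, Finset.sum_range_one] at h2
    norm_num at h2
    calc edist p (γ s) + edist (γ s) q = edist (γ s) p + edist q (γ s) := by
          rw [edist_comm p, edist_comm _ q]
      _ ≤ _ := h2
  · intro a b hab
    dsimp only
    rcases Nat.eq_zero_or_pos a with rfl | ha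
    · rw [if_pos rfl]
      split_ifs
      · exact le_refl _
      · exact h0s
      · exact h01
    · rw [if_neg (by omega : ¬ a = 0)]
      rcases Nat.lt_or_ge a 2 with h2a | h2a
      · have ha1 : a = 1 := by omega
        rw [if_pos ha1, if_neg (by omega : ¬ b = 0)]
        split_ifs
        · exact le_refl _
        · exact hs1
      · rw [if_neg (by omega : ¬ a = 1), if_neg (by omega : ¬ b = 0),
          if_neg (by omega : ¬ b = 1)]

set_option maxHeartbeats 1000000 in
theorem stmt3 (n : ℕ) (hn : 1 ≤ n) :
    ENNReal.ofReal (Real.sqrt (2 + 2 / n)) ≤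
      distortion {x : EuclideanSpace ℝ (Fin (n + 2)) |
        (∑ i, x i = 1 ∧ ∀ i, 0 ≤ x i) ∧ ∃ i, x i = 0} := by
  have hn0 : (0:ℝ) < (n:ℝ) := by exact_mod_cast hn
  have hn1 : (1:ℝ) ≤ (n:ℝ) := by exact_mod_cast hn
  set S : Set (EuclideanSpace ℝ (Fin (n + 2))) :=
    {x | (∑ i, x i = 1 ∧ ∀ i, 0 ≤ x i) ∧ ∃ i, x i = 0} with hS
  set t : ℝ := 1 / (4 * (n:ℝ)^2) with htdef
  have ht0 : 0 < t := by positivity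
  set c : ℝ := 1/(n:ℝ) - t with hcdef
  have hc0 : 0 < c := by
    rw [hcdef, htdef, sub_pos, div_lt_div_iff₀ (by positivity) hn0]
    nlinarith [hn1]
  set r : ℝ := t * Real.sqrt ((n:ℝ) * ((n:ℝ)+1)) with hrdef
  have hr0 : 0 < r := by
    apply mul_pos ht0
    apply Real.sqrt_pos.mpr; positivity
  have hrc : r ≤ c := by
    have h1 : Real.sqrt ((n:ℝ) * ((n:ℝ)+1)) ≤ 2*(n:ℝ) := by
      rw [show (2*(n:ℝ)) = Real.sqrt ((2*(n:ℝ))^2) by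
        rw [Real.sqrt_sq (by positivity)]]
      apply Real.sqrt_le_sqrt; nlinarith [hn1]
    calc r ≤ t * (2*(n:ℝ)) := by
          apply mul_le_mul_of_nonneg_left h1 ht0.le
      _ ≤ c := by
          rw [hcdef, htdef]
          rw [div_mul_eq_mul_div, le_sub_iff_add_le,
            div_add_div _ _ (by positivity) (by positivity),
            div_le_div_iff₀ (by positivity) hn0]
          nlinarith [hn1]
  -- the two points
  set p : EuclideanSpace ℝ (Fin (n+2)) :=
    WithLp.toLp 2 (fun i : Fin (n+2) => if (i:ℕ) = 0 then 0 else if (i:ℕ) = 1 then t*(n:ℝ) else c) with hpdef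
  set q : EuclideanSpace ℝ (Fin (n+2)) :=
    WithLp.toLp 2 (fun i : Fin (n+2) => if (i:ℕ) = 0 then t*(n:ℝ) else if (i:ℕ) = 1 then 0 else c) with hqdef
  have hp0 : p 0 = 0 := by simp [hpdef]
  have hp1 : p 1 = t*(n:ℝ) := by simp [hpdef]
  have hq0 : q 0 = t*(n:ℝ) := by simp [hqdef]
  have hq1 : q 1 = 0 := by simp [hqdef]
  have hptail : ∀ i : Fin n, p i.succ.succ = c := by
    intro i; simp only [hpdef, PiLp.toLp_apply, Fin.val_succ]; rw [if_neg (by omega), if_neg (by omega)]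
  have hqtail : ∀ i : Fin n, q i.succ.succ = c := by
    intro i; simp only [hqdef, PiLp.toLp_apply, Fin.val_succ]; rw [if_neg (by omega), if_neg (by omega)]
  have hpk : ∀ k : Fin (n+2), 2 ≤ (k:ℕ) → p k = c := by
    intro k hk; simp only [hpdef, PiLp.toLp_apply]; rw [if_neg (by omega), if_neg (by omega)]
  have hqk : ∀ k : Fin (n+2), 2 ≤ (k:ℕ) → q k = c := by
    intro k hk; simp only [hqdef, PiLp.toLp_apply]; rw [if_neg (by omega), if_neg (by omega)]
  have hcn : (n:ℝ) * c = 1 - t * n := by rw [hcdef]; field_simp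
  have hpsum : ∑ i, p i = 1 := by
    rw [sum3, hp0, hp1]
    rw [Finset.sum_congr rfl (fun i _ => hptail i), Finset.sum_const,
      Finset.card_univ, Fintype.card_fin, nsmul_eq_mul]
    rw [hcn]; ring
  have hqsum : ∑ i, q i = 1 := by
    rw [sum3, hq0, hq1]
    rw [Finset.sum_congr rfl (fun i _ => hqtail i), Finset.sum_const,
      Finset.card_univ, Fintype.card_fin, nsmul_eq_mul]
    rw [hcn]; ring
  have hpmem : p ∈ S := by
    refine ⟨⟨hpsum, ?_⟩, 0, hp0⟩
    intro i; simp only [hpdef, PiLp.toLp_apply]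
    split_ifs
    · exact le_refl _
    · positivity
    · exact hc0.le
  have hqmem : q ∈ S := by
    refine ⟨⟨hqsum, ?_⟩, 1, hq1⟩
    intro i; simp only [hqdef, PiLp.toLp_apply]
    split_ifs
    · positivity
    · exact le_refl _
    · exact hc0.le
  have hdistR : ∀ a b : ℝ, dist a b ^ 2 = (a - b)^2 := fun a b => by
    rw [Real.dist_eq, sq_abs]
  have hsq : ∀ x y : EuclideanSpace ℝ (Fin (n+2)), (dist x y)^2 = ∑ i, dist (x i) (y i) ^ 2 := by
    intro x y
    rw [EuclideanSpace.dist_eq, Real.sq_sqrt (Finset.sum_nonneg fun i _ => sq_nonneg _)]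
  have hdpq : dist p q = t * (n:ℝ) * Real.sqrt 2 := by
    rw [EuclideanSpace.dist_eq, sum3 (fun i => dist (p i) (q i) ^ 2)]
    simp only [hdistR]
    rw [hp0, hp1, hq0, hq1]
    rw [show ∑ i : Fin n, (p i.succ.succ - q i.succ.succ)^2 = 0 from
      Finset.sum_eq_zero (fun i _ => by rw [hptail i, hqtail i, sub_self]; ring)]
    rw [show ((0:ℝ) - t*(n:ℝ))^2 + (t*(n:ℝ) - 0)^2 + 0 = (t*(n:ℝ)*Real.sqrt 2)^2 by
      rw [mul_pow, Real.sq_sqrt (by norm_num : (0:ℝ) ≤ 2)]; ring]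
    exact Real.sqrt_sq (by positivity)
  have hrsq : r^2 = t^2 * ((n:ℝ)*((n:ℝ)+1)) := by
    rw [hrdef, mul_pow, Real.sq_sqrt (by positivity)]
  -- ridge lower bound
  have hridge : ∀ m : EuclideanSpace ℝ (Fin (n+2)), m ∈ S → m 0 = 0 → m 1 = 0 →
      r ≤ dist p m ∧ r ≤ dist m q := by
    intro m hm hm0 hm1
    obtain ⟨⟨hmsum, hmnn⟩, -⟩ := hm
    have htail : ∑ i : Fin n, m i.succ.succ = 1 := by
      have h := sum3 (fun i => m i)
      rw [hmsum, hm0, hm1] at h; linarith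
    have hcheb : t^2 * (n:ℝ)^2 ≤ (n:ℝ) * ∑ i : Fin n, (c - m i.succ.succ)^2 := by
      have h := sq_sum_le_card_mul_sum_sq (s := (Finset.univ : Finset (Fin n)))
        (f := fun i => c - m i.succ.succ)
      rw [Finset.sum_sub_distrib, htail, Finset.sum_const, Finset.card_univ,
        Fintype.card_fin, nsmul_eq_mul, hcn] at h
      calc t^2*(n:ℝ)^2 = (1 - t*(n:ℝ) - 1)^2 := by ring
        _ ≤ _ := h
    have htsum : t^2 * (n:ℝ) ≤ ∑ i : Fin n, (c - m i.succ.succ)^2 := by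
      rw [← mul_le_mul_iff_right₀ hn0]
      calc (n:ℝ) * (t^2*(n:ℝ)) = t^2*(n:ℝ)^2 := by ring
        _ ≤ _ := hcheb
    constructor
    · have hd2 : r^2 ≤ dist p m ^ 2 := by
        rw [hsq, sum3 (fun i => dist (p i) (m i) ^ 2)]
        simp only [hdistR]
        rw [hp0, hm0, hp1, hm1]
        rw [show ∑ i : Fin n, (p i.succ.succ - m i.succ.succ)^2
            = ∑ i : Fin n, (c - m i.succ.succ)^2 from
          Finset.sum_congr rfl fun i _ => by rw [hptail]]
        rw [hrsq]
        nlinarith [htsum]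
      calc r = Real.sqrt (r^2) := (Real.sqrt_sq hr0.le).symm
        _ ≤ Real.sqrt (dist p m ^ 2) := Real.sqrt_le_sqrt hd2
        _ = dist p m := Real.sqrt_sq dist_nonneg
    · have hd2 : r^2 ≤ dist q m ^ 2 := by
        rw [hsq, sum3 (fun i => dist (q i) (m i) ^ 2)]
        simp only [hdistR]
        rw [hq0, hm0, hq1, hm1]
        rw [show ∑ i : Fin n, (q i.succ.succ - m i.succ.succ)^2
            = ∑ i : Fin n, (c - m i.succ.succ)^2 from
          Finset.sum_congr rfl fun i _ => by rw [hqtail]]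
        rw [hrsq]
        nlinarith [htsum]
      calc r = Real.sqrt (r^2) := (Real.sqrt_sq hr0.le).symm
        _ ≤ Real.sqrt (dist q m ^ 2) := Real.sqrt_le_sqrt hd2
        _ = dist q m := Real.sqrt_sq dist_nonneg
        _ = dist m q := dist_comm q m
  -- key path bound
  have key : ∀ γ : Path p q, Set.range γ ⊆ S →
      ENNReal.ofReal (r + r) ≤ eVariationOn (fun u => γ u) Set.univ := by
    intro γ hγ
    obtain ⟨s, hs⟩ : ∃ s : unitInterval, r ≤ dist p (γ s) ∧ r ≤ dist (γ s) q := by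
      by_cases hB : ∃ (s : unitInterval) (k : Fin (n+2)), 2 ≤ (k:ℕ) ∧ γ s k = 0
      · obtain ⟨s, k, hk2, hk0⟩ := hB
        refine ⟨s, ?_, ?_⟩
        · calc r ≤ c := hrc
            _ = |p k - γ s k| := by rw [hpk k hk2, hk0, sub_zero, abs_of_pos hc0]
            _ ≤ dist p (γ s) := coord_abs_le_dist _ _ k
        · calc r ≤ c := hrc
            _ = |γ s k - q k| := by
                rw [hqk k hk2, hk0, zero_sub, abs_neg, abs_of_pos hc0]
            _ ≤ dist (γ s) q := coord_abs_le_dist _ _ k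
      · push_neg at hB
        have hcov : ∀ s : unitInterval, γ s 0 = 0 ∨ γ s 1 = 0 := by
          intro s
          obtain ⟨⟨-, -⟩, k, hk⟩ := hγ (mem_range_self s)
          rcases Nat.lt_or_ge (k:ℕ) 2 with h | h
          · rcases (by omega : (k:ℕ) = 0 ∨ (k:ℕ) = 1) with h0 | h1
            · left; rwa [show k = 0 from Fin.ext (by simp [h0])] at hk
            · right; rwa [show k = 1 from Fin.ext (by simp [h1])] at hk
          · exact absurd hk (hB s k h)
        have hA : IsClosed {s : unitInterval | γ s 0 = 0} :=
          isClosed_eq (by fun_prop) continuous_const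
        have hB' : IsClosed {s : unitInterval | γ s 1 = 0} :=
          isClosed_eq (by fun_prop) continuous_const
        obtain ⟨s, -, hs0, hs1⟩ :=
          isPreconnected_closed_iff.mp isPreconnected_univ _ _ hA hB'
            (fun s _ => hcov s) ⟨0, trivial, by show γ 0 0 = 0; rw [γ.source]; exact hp0⟩
            ⟨1, trivial, by show γ 1 1 = 0; rw [γ.target]; exact hq1⟩
        have h := hridge (γ s) (hγ (mem_range_self s)) hs0 hs1
        exact ⟨s, h.1, h.2⟩
    calc ENNReal.ofReal (r + r)
        ≤ edist p (γ s) + edist (γ s) q := by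
          rw [edist_dist, edist_dist, ← ENNReal.ofReal_add dist_nonneg dist_nonneg]
          exact ENNReal.ofReal_le_ofReal (add_le_add hs.1 hs.2)
      _ ≤ _ := two_point_var γ s
  have hintr : ENNReal.ofReal (r + r) ≤ intrinsicDist S p q :=
    le_iInf fun γ => le_iInf fun h => key γ h
  have hedist : edist p q = ENNReal.ofReal (t*(n:ℝ)*Real.sqrt 2) := by
    rw [edist_dist, hdpq]
  have hd0 : edist p q ≠ 0 := by
    rw [hedist, ne_eq, ENNReal.ofReal_eq_zero, not_le]
    positivity
  have hdtop : edist p q ≠ ⊤ := by rw [hedist]; exact ENNReal.ofReal_ne_top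
  have halg : Real.sqrt (2 + 2/(n:ℝ)) * (t*(n:ℝ)*Real.sqrt 2) = r + r := by
    have h4 : Real.sqrt ((2 + 2/(n:ℝ)) * (2 * (n:ℝ)^2))
        = Real.sqrt (4 * ((n:ℝ)*((n:ℝ)+1))) := by
      congr 1; field_simp; ring
    have e1 : Real.sqrt (2 + 2/(n:ℝ)) * Real.sqrt (2 * (n:ℝ)^2)
        = Real.sqrt 4 * Real.sqrt ((n:ℝ)*((n:ℝ)+1)) := by
      rw [← Real.sqrt_mul (by positivity), ← Real.sqrt_mul (by norm_num), h4]
    have e2 : Real.sqrt (2 * (n:ℝ)^2) = Real.sqrt 2 * (n:ℝ) := by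
      rw [Real.sqrt_mul (by norm_num), Real.sqrt_sq hn0.le]
    have e3 : Real.sqrt 4 = 2 := by
      rw [show (4:ℝ) = 2^2 by norm_num, Real.sqrt_sq (by norm_num)]
    have e4 : Real.sqrt (2 + 2/(n:ℝ)) * (Real.sqrt 2 * (n:ℝ))
        = 2 * Real.sqrt ((n:ℝ)*((n:ℝ)+1)) := by
      rw [← e2, e1, e3]
    calc Real.sqrt (2 + 2/(n:ℝ)) * (t*(n:ℝ)*Real.sqrt 2)
        = t * (Real.sqrt (2 + 2/(n:ℝ)) * (Real.sqrt 2 * (n:ℝ))) := by ring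
      _ = t * (2 * Real.sqrt ((n:ℝ)*((n:ℝ)+1))) := by rw [e4]
      _ = r + r := by rw [hrdef]; ring
  have hstep : ENNReal.ofReal (Real.sqrt (2 + 2 / (n:ℝ))) ≤ intrinsicDist S p q / edist p q := by
    rw [ENNReal.le_div_iff_mul_le (Or.inl hd0) (Or.inl hdtop), hedist,
      ← ENNReal.ofReal_mul (Real.sqrt_nonneg _), halg]
    exact hintr
  refine hstep.trans ?_
  exact le_iSup₂_of_le p hpmem (le_iSup₂_of_le q hqmem le_rfl)
end

section
/- The map P : ℝ³ → ℝ³ defined on the cylinder Z = [0, πr] × B²(0, r) (with coordinates (x, y, z), and B²(0,r) the closed disc of radius r) by P(x,y,z) = (0, y, z)/(1-x) is Lipschitz on Z with Lipschitz constant at most 1 + 6πr, provided 6πr ≤ 1. -/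
set_option maxHeartbeats 1000000

lemma key_aux (p r u u' δ d1 d2 e1 e2 : ℝ) (hp : 3 ≤ p) (hr : 0 < r)
    (h6 : 6 * p * r ≤ 1) (hu : 1 - p * r ≤ u) (hu1 : u ≤ 1)
    (hu' : 1 - p * r ≤ u') (hu'1 : u' ≤ 1) (he : e1 ^ 2 + e2 ^ 2 ≤ r ^ 2) :
    (d1 * u' + e1 * δ) ^ 2 + (d2 * u' + e2 * δ) ^ 2 ≤
      (1 + 6 * p * r) ^ 2 * ((δ ^ 2 + d1 ^ 2 + d2 ^ 2) * (u * u') ^ 2) := by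
  have hpr : p * r ≤ 1 / 6 := by nlinarith
  have hr18 : r ≤ 1 / 18 := by nlinarith
  have hu0 : (5:ℝ)/6 ≤ u := by linarith
  have hu'0 : (5:ℝ)/6 ≤ u' := by linarith
  have hK2 : (d1 * e1 + d2 * e2) ^ 2 ≤ (d1 ^ 2 + d2 ^ 2) * r ^ 2 := by
    nlinarith [sq_nonneg (d1 * e2 - d2 * e1), sq_nonneg d1, sq_nonneg d2]
  have h1 : (d1 * u' + e1 * δ) ^ 2 + (d2 * u' + e2 * δ) ^ 2 ≤
      (u' ^ 2 + r ^ 2) * (δ ^ 2 + d1 ^ 2 + d2 ^ 2) := by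
    nlinarith [sq_nonneg (u' * δ - (d1 * e1 + d2 * e2)), hK2,
      mul_le_mul_of_nonneg_left he (sq_nonneg δ)]
  have hA : 1 + 4 * p * r ≤ (1 + 6 * p * r) * u := by nlinarith
  have hB : 1 + 8 * p * r ≤ ((1 + 6 * p * r) * u) ^ 2 := by nlinarith
  have hpr0 : 3 * r ≤ p * r := by nlinarith
  have h25 : (25:ℝ)/36 ≤ u' ^ 2 := by nlinarith
  have h3 : (1 + 8 * p * r) * u' ^ 2 ≤ (1 + 6 * p * r) ^ 2 * (u * u') ^ 2 := by
    nlinarith [mul_le_mul_of_nonneg_right hB (sq_nonneg u')]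
  have h4 : u' ^ 2 + r ^ 2 ≤ (1 + 8 * p * r) * u' ^ 2 := by
    nlinarith [mul_le_mul_of_nonneg_left h25 (show (0:ℝ) ≤ 8 * p * r by positivity),
      mul_le_mul_of_nonneg_left hr18 hr.le]
  have h2 : u' ^ 2 + r ^ 2 ≤ (1 + 6 * p * r) ^ 2 * (u * u') ^ 2 := h4.trans h3
  calc (d1 * u' + e1 * δ) ^ 2 + (d2 * u' + e2 * δ) ^ 2
      ≤ (u' ^ 2 + r ^ 2) * (δ ^ 2 + d1 ^ 2 + d2 ^ 2) := h1
    _ ≤ (1 + 6 * p * r) ^ 2 * (u * u') ^ 2 * (δ ^ 2 + d1 ^ 2 + d2 ^ 2) := by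
        apply mul_le_mul_of_nonneg_right h2 (by positivity)
    _ = (1 + 6 * p * r) ^ 2 * ((δ ^ 2 + d1 ^ 2 + d2 ^ 2) * (u * u') ^ 2) := by ring

theorem stmt5 (r : ℝ) (hr : 0 < r) (h6 : 6 * Real.pi * r ≤ 1)
    (P : EuclideanSpace ℝ (Fin 3) → EuclideanSpace ℝ (Fin 3))
    (hP : ∀ q, P q 0 = 0 ∧ P q 1 = q 1 / (1 - q 0) ∧ P q 2 = q 2 / (1 - q 0)) :
    ∀ q q' : EuclideanSpace ℝ (Fin 3),
      q 0 ∈ Set.Icc 0 (Real.pi * r) → (q 1) ^ 2 + (q 2) ^ 2 ≤ r ^ 2 →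
      q' 0 ∈ Set.Icc 0 (Real.pi * r) → (q' 1) ^ 2 + (q' 2) ^ 2 ≤ r ^ 2 →
      ‖P q - P q'‖ ≤ (1 + 6 * Real.pi * r) * ‖q - q'‖ := by
  intro q q' hq0 hq12 hq'0 hq'12
  obtain ⟨hP0, hP1, hP2⟩ := hP q
  obtain ⟨hP0', hP1', hP2'⟩ := hP q'
  have hpi := Real.pi_gt_three
  obtain ⟨ha0, ha1⟩ := hq0
  obtain ⟨ha0', ha1'⟩ := hq'0
  have hpr : Real.pi * r ≤ 1 / 6 := by nlinarith
  have hu : (0:ℝ) < 1 - q 0 := by linarith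
  have hu' : (0:ℝ) < 1 - q' 0 := by linarith
  have hC : (0:ℝ) ≤ 1 + 6 * Real.pi * r := by nlinarith
  have hn1 : ‖P q - P q'‖ ^ 2 =
      (q 1 / (1 - q 0) - q' 1 / (1 - q' 0)) ^ 2 +
      (q 2 / (1 - q 0) - q' 2 / (1 - q' 0)) ^ 2 := by
    rw [← Real.sq_sqrt (by positivity :
      (0:ℝ) ≤ (q 1 / (1 - q 0) - q' 1 / (1 - q' 0)) ^ 2 +
      (q 2 / (1 - q 0) - q' 2 / (1 - q' 0)) ^ 2)]
    congr 1
    rw [EuclideanSpace.norm_eq]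
    congr 1
    simp [Fin.sum_univ_three, PiLp.sub_apply, hP0, hP0', hP1, hP1', hP2, hP2',
      Real.norm_eq_abs, sq_abs]
  have hn2 : ‖q - q'‖ ^ 2 =
      (q 0 - q' 0) ^ 2 + (q 1 - q' 1) ^ 2 + (q 2 - q' 2) ^ 2 := by
    rw [← Real.sq_sqrt (by positivity :
      (0:ℝ) ≤ (q 0 - q' 0) ^ 2 + (q 1 - q' 1) ^ 2 + (q 2 - q' 2) ^ 2)]
    congr 1
    rw [EuclideanSpace.norm_eq]
    congr 1
    simp [Fin.sum_univ_three, PiLp.sub_apply, Real.norm_eq_abs, sq_abs]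
  have hsq : ‖P q - P q'‖ ^ 2 ≤ ((1 + 6 * Real.pi * r) * ‖q - q'‖) ^ 2 := by
    rw [hn1, mul_pow, hn2]
    have hrw : (q 1 / (1 - q 0) - q' 1 / (1 - q' 0)) ^ 2 +
        (q 2 / (1 - q 0) - q' 2 / (1 - q' 0)) ^ 2 =
        (((q 1 - q' 1) * (1 - q' 0) + q' 1 * (q 0 - q' 0)) ^ 2 +
         ((q 2 - q' 2) * (1 - q' 0) + q' 2 * (q 0 - q' 0)) ^ 2) /
        ((1 - q 0) * (1 - q' 0)) ^ 2 := by
      field_simp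
      ring
    rw [hrw, div_le_iff₀ (by positivity)]
    refine le_trans (key_aux Real.pi r (1 - q 0) (1 - q' 0) (q 0 - q' 0) (q 1 - q' 1)
      (q 2 - q' 2) (q' 1) (q' 2) (le_of_lt hpi) hr h6 (by linarith) (by linarith)
      (by linarith) (by linarith) hq'12) (le_of_eq (by ring))
  calc ‖P q - P q'‖ = Real.sqrt (‖P q - P q'‖ ^ 2) :=
        (Real.sqrt_sq (norm_nonneg _)).symm
    _ ≤ Real.sqrt (((1 + 6 * Real.pi * r) * ‖q - q'‖) ^ 2) :=
        Real.sqrt_le_sqrt hsq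
    _ = (1 + 6 * Real.pi * r) * ‖q - q'‖ :=
        Real.sqrt_sq (by positivity)
end

section
/- Let A ⊂ ℝⁿ be a closed set with A = -A and 0 ∉ A. Then the distortion of A is at least π/2. -/
/-!
Let `p ∈ A` have minimal norm `r > 0`. Then `-p ∈ A`, `|p - (-p)| = 2r`, and every path in `A`
from `p` to `-p` stays outside the open ball of radius `r` while the direction of its points
turns through the angle `π`. On a fine partition of such a path, two consecutive points at
angle `θ` are at distance at least `2r sin (θ/2) ≈ rθ`, so the path has length at least `πr`,
and the ratio is at least `π/2`.
-/

open Set ENNReal RealInnerProductSpace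

open Real Filter Topology InnerProductGeometry

section Angle

variable {V : Type*} [NormedAddCommGroup V] [InnerProductSpace ℝ V]

theorem angle_le_sum_range_angle {f : ℕ → V} (hf : f 0 ≠ 0) (m : ℕ) :
    angle (f 0) (f m) ≤ ∑ i ∈ Finset.range m, angle (f i) (f (i + 1)) := by
  induction m with
  | zero => simp [angle_self hf]
  | succ m ih =>
    rw [Finset.sum_range_succ]
    linarith [angle_le_angle_add_angle (f 0) (f m) (f (m + 1))]

theorem two_mul_mul_sin_angle_div_two_le_norm_sub {r : ℝ} (hr : 0 ≤ r) {x y : V}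
    (hx : r ≤ ‖x‖) (hy : r ≤ ‖y‖) : 2 * r * sin (angle x y / 2) ≤ ‖x - y‖ := by
  have hsin : 0 ≤ sin (angle x y / 2) :=
    sin_nonneg_of_nonneg_of_le_pi (by linarith [angle_nonneg x y])
      (by linarith [angle_le_pi x y, pi_pos])
  have hcos : cos (angle x y) = 1 - 2 * sin (angle x y / 2) ^ 2 := by
    rw [sin_sq_eq_half_sub, mul_div_cancel₀ _ two_ne_zero]; ring
  have hlaw := norm_sub_sq_eq_norm_sq_add_norm_sq_sub_two_mul_norm_mul_norm_mul_cos_angle x y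
  rw [hcos] at hlaw
  refine (pow_le_pow_iff_left₀ (by positivity) (norm_nonneg _) two_ne_zero).1 ?_
  nlinarith [sq_nonneg (‖x‖ - ‖y‖), mul_le_mul hx hy hr (hr.trans hx)]

theorem mul_one_sub_mul_angle_le_norm_sub {r δ : ℝ} (hr : 0 ≤ r) {x y : V}
    (hx : r ≤ ‖x‖) (hy : r ≤ ‖y‖) (hδ : angle x y ≤ δ) :
    r * (1 - δ ^ 2 / 24) * angle x y ≤ ‖x - y‖ := by
  have hθ := angle_nonneg x y
  have hsin := sin_ge_sub_cube (x := angle x y / 2) (by positivity)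
  refine le_trans ?_ (two_mul_mul_sin_angle_div_two_le_norm_sub hr hx hy)
  nlinarith [mul_le_mul hδ hδ hθ (hθ.trans hδ), mul_nonneg hr hθ]

theorem Path.exists_monotone_angle_le {x y : V} (γ : Path x y) (hγ : ∀ t, γ t ≠ 0) {δ : ℝ}
    (hδ : 0 < δ) : ∃ u : ℕ → unitInterval, u 0 = 0 ∧ Monotone u ∧ (∃ m, u m = 1) ∧
      ∀ i, angle (γ (u (i + 1))) (γ (u i)) ≤ δ := by
  have hcont : ∀ s, Continuous fun t => angle (γ s) (γ t) := fun s =>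
    continuous_iff_continuousAt.2 fun t => (continuousAt_angle (x := (γ s, γ t)) (hγ s)
      (hγ t)).comp (f := fun t => (γ s, γ t)) (by fun_prop)
  obtain ⟨u, hu0, hu, ⟨m, hm⟩, hstep⟩ := exists_monotone_Icc_subset_open_cover_unitInterval
    (c := fun s => {t | angle (γ s) (γ t) < δ / 2})
    (fun s => isOpen_lt (hcont s) continuous_const)
    (fun t _ => mem_iUnion.2 ⟨t, by simp [angle_self (hγ t), hδ]⟩)
  refine ⟨u, hu0, hu, ⟨m, hm m le_rfl⟩, fun i => ?_⟩
  obtain ⟨s, hs⟩ := hstep i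
  have h1 : angle (γ s) (γ (u i)) < δ / 2 := hs ⟨le_rfl, hu i.le_succ⟩
  have h2 : angle (γ s) (γ (u (i + 1))) < δ / 2 := hs ⟨hu i.le_succ, le_rfl⟩
  linarith [angle_le_angle_add_angle (γ (u (i + 1))) (γ s) (γ (u i)),
    angle_comm (γ s) (γ (u (i + 1)))]

theorem ofReal_mul_one_sub_mul_angle_le_eVariationOn {r δ : ℝ} (hr : 0 < r) (hδ₀ : 0 < δ)
    (hδ₁ : δ ≤ 1) {x y : V} (γ : Path x y) (hγ : ∀ t, r ≤ ‖γ t‖) :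
    ENNReal.ofReal (r * (1 - δ ^ 2 / 24) * angle x y) ≤ eVariationOn (fun t => γ t) univ := by
  have hγ0 : ∀ t, γ t ≠ 0 := fun t => norm_pos_iff.1 (hr.trans_le (hγ t))
  obtain ⟨u, hu0, hu, ⟨m, hm⟩, hsmall⟩ := γ.exists_monotone_angle_le hγ0 hδ₀
  have hc : 0 ≤ r * (1 - δ ^ 2 / 24) := mul_nonneg hr.le (by nlinarith)
  calc ENNReal.ofReal (r * (1 - δ ^ 2 / 24) * angle x y)
      ≤ ENNReal.ofReal (∑ i ∈ Finset.range m,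
          r * (1 - δ ^ 2 / 24) * angle (γ (u (i + 1))) (γ (u i))) := by
        refine ENNReal.ofReal_le_ofReal ?_
        rw [← Finset.mul_sum]
        refine mul_le_mul_of_nonneg_left ?_ hc
        simpa [hu0, hm, angle_comm] using
          angle_le_sum_range_angle (f := fun i => γ (u i)) (by simpa [hu0] using hγ0 0) m
    _ ≤ ENNReal.ofReal (∑ i ∈ Finset.range m, dist (γ (u (i + 1))) (γ (u i))) :=
        ENNReal.ofReal_le_ofReal <| Finset.sum_le_sum fun i _ =>
          (mul_one_sub_mul_angle_le_norm_sub hr.le (hγ _) (hγ _) (hsmall i)).trans_eq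
            (dist_eq_norm _ _).symm
    _ = ∑ i ∈ Finset.range m, edist (γ (u (i + 1))) (γ (u i)) := by
        rw [ENNReal.ofReal_sum_of_nonneg fun i _ => dist_nonneg]
        simp only [edist_dist]
    _ ≤ eVariationOn (fun t => γ t) univ := eVariationOn.sum_le hu fun _ => mem_univ _

theorem ofReal_mul_angle_le_eVariationOn {r : ℝ} (hr : 0 < r) {x y : V} (γ : Path x y)
    (hγ : ∀ t, r ≤ ‖γ t‖) :
    ENNReal.ofReal (r * angle x y) ≤ eVariationOn (fun t => γ t) univ := by
  have hlim : Tendsto (fun δ : ℝ => ENNReal.ofReal (r * (1 - δ ^ 2 / 24) * angle x y)) (𝓝[>] 0)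
      (𝓝 (ENNReal.ofReal (r * angle x y))) := by
    have : Continuous fun δ : ℝ => ENNReal.ofReal (r * (1 - δ ^ 2 / 24) * angle x y) :=
      ENNReal.continuous_ofReal.comp (by fun_prop)
    simpa using (this.tendsto 0).mono_left nhdsWithin_le_nhds
  exact le_of_tendsto hlim <| eventually_of_mem (Ioc_mem_nhdsGT one_pos) fun δ hδ =>
    ofReal_mul_one_sub_mul_angle_le_eVariationOn hr hδ.1 hδ.2 γ hγ

end Angle

theorem IsClosed.exists_isMinOn_norm {E : Type*} [NormedAddCommGroup E] [ProperSpace E]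
    {A : Set E} (hA : IsClosed A) (hne : A.Nonempty) : ∃ p ∈ A, IsMinOn norm A p := by
  obtain ⟨p, hp, hdist⟩ := hA.exists_infDist_eq_dist hne 0
  refine ⟨p, hp, fun q hq => ?_⟩
  have := Metric.infDist_le_dist_of_mem (x := 0) hq
  rwa [hdist, dist_zero_left, dist_zero_left] at this

theorem ofReal_mul_angle_le_intrinsicDist {n : ℕ} {A : Set (EuclideanSpace ℝ (Fin n))} {r : ℝ}
    (hr : 0 < r) (hA : ∀ q ∈ A, r ≤ ‖q‖) (p q : EuclideanSpace ℝ (Fin n)) :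
    ENNReal.ofReal (r * angle p q) ≤ intrinsicDist A p q :=
  le_iInf₂ fun γ hγA =>
    ofReal_mul_angle_le_eVariationOn hr γ fun t => hA _ (hγA (mem_range_self t))

theorem stmt7 {n : ℕ} (A : Set (EuclideanSpace ℝ (Fin n))) (hA : IsClosed A)
    (hne : A.Nonempty) (hsym : -A = A) (h0 : (0 : EuclideanSpace ℝ (Fin n)) ∉ A) :
    ENNReal.ofReal (Real.pi / 2) ≤ distortion A := by
  obtain ⟨p, hp, hmin⟩ := hA.exists_isMinOn_norm hne
  have hp0 : p ≠ 0 := fun h => h0 (h ▸ hp)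
  have hr : 0 < ‖p‖ := norm_pos_iff.2 hp0
  have hnegp : -p ∈ A := by rw [← hsym, Set.mem_neg, neg_neg]; exact hp
  have hedist : edist p (-p) = ENNReal.ofReal (2 * ‖p‖) := by
    rw [edist_dist, dist_eq_norm, sub_neg_eq_add, ← two_smul ℝ p, norm_smul, Real.norm_two]
  calc ENNReal.ofReal (π / 2)
      = ENNReal.ofReal (‖p‖ * angle p (-p)) / edist p (-p) := by
        rw [hedist, angle_self_neg_of_nonzero hp0, ← ENNReal.ofReal_div_of_pos (by positivity)]
        congr 1
        field_simp
    _ ≤ intrinsicDist A p (-p) / edist p (-p) := by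
        gcongr
        exact ofReal_mul_angle_le_intrinsicDist hr hmin p (-p)
    _ ≤ distortion A := le_iSup₂_of_le p hp (le_iSup₂_of_le (-p) hnegp le_rfl)
end

section
/- Let A ⊂ ℝⁿ be a closed set whose complement has a bounded connected component C, and let B ⊂ C be an open ball of maximal radius contained in C, which after normalization is the open unit ball centered at the origin. Then for every p ∈ ∂B ∩ A there exists q ∈ ∂B ∩ A such that the angle between p and q is at least π/2 (i.e., ⟨p, q⟩ ≤ 0). -/
open RealInnerProductSpace

theorem stmt10 {n : ℕ} (A : Set (EuclideanSpace ℝ (Fin n))) (hA : IsClosed A)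
    (x : EuclideanSpace ℝ (Fin n)) (hx : x ∈ Aᶜ)
    (C : Set (EuclideanSpace ℝ (Fin n))) (hC : C = connectedComponentIn Aᶜ x)
    (hbdd : Bornology.IsBounded C)
    (hball : Metric.ball (0 : EuclideanSpace ℝ (Fin n)) 1 ⊆ C)
    (hmax : ∀ (c : EuclideanSpace ℝ (Fin n)) (ρ : ℝ), 1 < ρ → ¬ Metric.ball c ρ ⊆ C) :
    ∀ p ∈ Metric.sphere (0 : EuclideanSpace ℝ (Fin n)) 1 ∩ A,
      ∃ q ∈ Metric.sphere (0 : EuclideanSpace ℝ (Fin n)) 1 ∩ A, ⟪p, q⟫ ≤ 0 := by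
  intro p hp
  by_contra hcon
  push_neg at hcon
  have hpS : ‖p‖ = 1 := by simpa using hp.1
  have hCsub : C ⊆ Aᶜ := by rw [hC]; exact connectedComponentIn_subset _ _
  have hnormA : ∀ q ∈ A, 1 ≤ ‖q‖ := by
    intro q hq
    by_contra h
    push_neg at h
    exact hCsub (hball (by simpa [Metric.mem_ball] using h)) hq
  have hgt : ∀ q ∈ A, ⟪p, q⟫ ≤ 0 → 1 < ‖q‖ := by
    intro q hq hle
    rcases lt_or_eq_of_le (hnormA q hq) with h | h
    · exact h
    · exact absurd hle (not_le.mpr (hcon q ⟨by simpa [Metric.mem_sphere, dist_eq_norm] using h.symm, hq⟩))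
  set K := (A ∩ Metric.closedBall (0 : EuclideanSpace ℝ (Fin n)) 2) ∩ {q | ⟪p, q⟫ ≤ 0} with hK
  have hKc : IsCompact K := by
    apply IsCompact.inter_right
    · exact (isCompact_closedBall _ _).inter_left hA
    · exact isClosed_le (continuous_const.inner continuous_id) continuous_const
  obtain ⟨m, hm1, hmK⟩ : ∃ m : ℝ, 1 < m ∧ ∀ q ∈ K, m ≤ ‖q‖ := by
    rcases K.eq_empty_or_nonempty with hKe | hKne
    · exact ⟨3/2, by norm_num, by simp [hKe]⟩
    · obtain ⟨q₀, hq₀K, hq₀min⟩ := hKc.exists_isMinOn hKne (continuous_norm.continuousOn)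
      exact ⟨‖q₀‖, hgt q₀ hq₀K.1.1 hq₀K.2, fun q hq => hq₀min hq⟩
  set t : ℝ := min (1/2) ((m^2 - 1)/5) with ht
  have ht0 : 0 < t := lt_min (by norm_num) (by nlinarith)
  have ht12 : t ≤ 1/2 := min_le_left _ _
  have ht5 : t ≤ (m^2 - 1)/5 := min_le_right _ _
  set ρ : ℝ := Real.sqrt (1 + t^2) with hρ
  have hρ1 : 1 < ρ := by
    rw [hρ]
    nlinarith [Real.sq_sqrt (by positivity : (0:ℝ) ≤ 1 + t^2),
      Real.sqrt_nonneg (1 + t^2)]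
  have hρ32 : ρ ≤ 3/2 := by
    rw [hρ]
    rw [show (3:ℝ)/2 = Real.sqrt ((3/2)^2) by rw [Real.sqrt_sq]; norm_num]
    apply Real.sqrt_le_sqrt
    nlinarith
  -- the shifted ball avoids A
  have hdist : ∀ q ∈ A, ρ ≤ dist (-(t • p)) q := by
    intro q hq
    have hd : dist (-(t • p)) q = ‖q + t • p‖ := by
      rw [dist_comm, dist_eq_norm]
      congr 1
      abel
    have hsq : ‖q + t • p‖^2 = ‖q‖^2 + 2 * t * ⟪q, p⟫ + t^2 := by
      rw [show ‖q + t • p‖^2 = ‖q‖^2 + 2 * ⟪q, t • p⟫ + ‖t • p‖^2 from by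
        have := norm_add_sq_real q (t • p); linarith]
      rw [real_inner_smul_right, norm_smul, Real.norm_eq_abs, abs_of_pos ht0, hpS]
      ring
    have key : 1 + t^2 ≤ ‖q + t • p‖^2 := by
      rcases le_or_gt ⟪p, q⟫ 0 with hpq | hpq
      · rcases le_or_gt ‖q‖ 2 with h2 | h2
        · have hqK : q ∈ K := ⟨⟨hq, by simpa [Metric.mem_closedBall, dist_eq_norm] using h2⟩, hpq⟩
          have hmq : m ≤ ‖q‖ := hmK q hqK
          have hip : -(2:ℝ) ≤ ⟪q, p⟫ := by
            have := abs_real_inner_le_norm q p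
            rw [hpS] at this
            have := abs_le.mp this
            nlinarith
          nlinarith
        · -- ‖q‖ > 2 : dist ≥ ‖q‖ - t
          have hip : -(‖q‖) ≤ ⟪q, p⟫ := by
            have := abs_real_inner_le_norm q p
            rw [hpS] at this
            have := abs_le.mp this
            nlinarith
          nlinarith
      · have h1 : 1 ≤ ‖q‖ := hnormA q hq
        have : 0 ≤ ⟪q, p⟫ := by rw [real_inner_comm]; linarith
        nlinarith
    rw [hd, hρ]
    calc Real.sqrt (1 + t^2) ≤ Real.sqrt (‖q + t • p‖^2) := Real.sqrt_le_sqrt key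
    _ = ‖q + t • p‖ := Real.sqrt_sq (norm_nonneg _)
  have hsubA : Metric.ball (-(t • p)) ρ ⊆ Aᶜ := by
    intro y hy hyA
    exact absurd (hdist y hyA) (not_le.mpr (by simpa [Metric.mem_ball, dist_comm] using hy))
  have h0mem : (0 : EuclideanSpace ℝ (Fin n)) ∈ Metric.ball (-(t • p)) ρ := by
    rw [Metric.mem_ball, dist_zero_left, norm_neg, norm_smul, Real.norm_eq_abs,
      abs_of_pos ht0, hpS]
    linarith
  have h0C : (0 : EuclideanSpace ℝ (Fin n)) ∈ C := hball (Metric.mem_ball_self one_pos)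
  have hcomp : connectedComponentIn Aᶜ x = connectedComponentIn Aᶜ 0 :=
    connectedComponentIn_eq (by rw [← hC]; exact h0C)
  have hsubC : Metric.ball (-(t • p)) ρ ⊆ C := by
    rw [hC, hcomp]
    exact (convex_ball _ _).isPreconnected.subset_connectedComponentIn h0mem hsubA
  exact hmax (-(t • p)) ρ hρ1 hsubC
end

section
/- If the complement of a closed path-connected set A ⊂ ℝⁿ has a bounded component, then the distortion of A is at least π/(2√2). -/
open Set ENNReal RealInnerProductSpace

section Aux

open Real InnerProductGeometry

variable {V : Type*} [NormedAddCommGroup V] [InnerProductSpace ℝ V]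


lemma angle_triangle_unit {a b c : V} (ha : ‖a‖ = 1) (hb : ‖b‖ = 1) (hc : ‖c‖ = 1) :
    angle a c ≤ angle a b + angle b c := by
  by_cases hsum : π ≤ angle a b + angle b c
  · exact (angle_le_pi a c).trans hsum
  push_neg at hsum
  have hnn : 0 ≤ angle a b + angle b c := add_nonneg (angle_nonneg _ _) (angle_nonneg _ _)
  set s := angle a b with hs
  set t := angle b c with ht
  have hcs : Real.cos s = ⟪a, b⟫ := by rw [hs, cos_angle, ha, hb]; ring_nf
  have hct : Real.cos t = ⟪b, c⟫ := by rw [ht, cos_angle, hb, hc]; ring_nf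
  have inner_self_a : ⟪a, a⟫ = 1 := by
    rw [real_inner_self_eq_norm_sq, ha]; norm_num
  have inner_self_c : ⟪c, c⟫ = 1 := by
    rw [real_inner_self_eq_norm_sq, hc]; norm_num
  have inner_self_b : ⟪b, b⟫ = 1 := by
    rw [real_inner_self_eq_norm_sq, hb]; norm_num
  have hss : Real.sin s = Real.sqrt (1 - ⟪a, b⟫ ^ 2) := by
    have := sin_angle_mul_norm_mul_norm a b
    rw [ha, hb] at this
    simpa [inner_self_a, inner_self_b, sq, ha, hb] using this
  have hst : Real.sin t = Real.sqrt (1 - ⟪b, c⟫ ^ 2) := by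
    have := sin_angle_mul_norm_mul_norm b c
    rw [hb, hc] at this
    simpa [inner_self_b, inner_self_c, sq, hb, hc] using this
  set a' := a - ⟪a, b⟫ • b with ha'
  set c' := c - ⟪c, b⟫ • b with hc'
  have hna' : ‖a'‖ = Real.sqrt (1 - ⟪a, b⟫ ^ 2) := by
    rw [← Real.sqrt_sq (norm_nonneg a')]
    congr 1
    rw [ha', norm_sub_sq_real, real_inner_smul_right, norm_smul, real_inner_comm]
    simp [ha, hb, Real.norm_eq_abs, mul_pow, sq_abs]
    ring
  have hnc' : ‖c'‖ = Real.sqrt (1 - ⟪b, c⟫ ^ 2) := by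
    rw [← Real.sqrt_sq (norm_nonneg c')]
    congr 1
    rw [hc', norm_sub_sq_real, real_inner_smul_right, norm_smul, real_inner_comm]
    simp [hb, hc, Real.norm_eq_abs, mul_pow, sq_abs]
    rw [real_inner_comm]; ring
  have hkey : Real.cos (s + t) ≤ ⟪a, c⟫ := by
    have hinner : ⟪a', c'⟫ = ⟪a, c⟫ - ⟪a, b⟫ * ⟪b, c⟫ := by
      rw [ha', hc']
      simp [inner_sub_left, inner_sub_right, real_inner_smul_left, real_inner_smul_right,
        inner_self_b, real_inner_comm b a, real_inner_comm c b, hb]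
    have hCS : -(‖a'‖ * ‖c'‖) ≤ ⟪a', c'⟫ := neg_le_of_abs_le (abs_real_inner_le_norm a' c')
    rw [hinner, hna', hnc'] at hCS
    rw [Real.cos_add, hcs, hct, hss, hst]
    linarith
  have : angle a c = Real.arccos ⟪a, c⟫ := by
    rw [angle, ha, hc]; norm_num
  rw [this]
  calc Real.arccos ⟪a, c⟫ ≤ Real.arccos (Real.cos (s + t)) := by
        unfold Real.arccos
        have := Real.monotone_arcsin hkey
        linarith
    _ = s + t := Real.arccos_cos hnn hsum.le

lemma angle_triangle {x y z : V} (hx : x ≠ 0) (hy : y ≠ 0) (hz : z ≠ 0) :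
    angle x z ≤ angle x y + angle y z := by
  have hxn : (0:ℝ) < ‖x‖ := norm_pos_iff.2 hx
  have hyn : (0:ℝ) < ‖y‖ := norm_pos_iff.2 hy
  have hzn : (0:ℝ) < ‖z‖ := norm_pos_iff.2 hz
  have h1 : angle x z = angle (‖x‖⁻¹ • x) (‖z‖⁻¹ • z) := by
    rw [angle_smul_left_of_pos _ _ (inv_pos.2 hxn), angle_smul_right_of_pos _ _ (inv_pos.2 hzn)]
  have h2 : angle x y = angle (‖x‖⁻¹ • x) (‖y‖⁻¹ • y) := by
    rw [angle_smul_left_of_pos _ _ (inv_pos.2 hxn), angle_smul_right_of_pos _ _ (inv_pos.2 hyn)]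
  have h3 : angle y z = angle (‖y‖⁻¹ • y) (‖z‖⁻¹ • z) := by
    rw [angle_smul_left_of_pos _ _ (inv_pos.2 hyn), angle_smul_right_of_pos _ _ (inv_pos.2 hzn)]
  rw [h1, h2, h3]
  exact angle_triangle_unit (norm_smul_inv_norm hx) (norm_smul_inv_norm hy) (norm_smul_inv_norm hz)

open Real InnerProductGeometry Set

variable {V : Type*} [NormedAddCommGroup V] [InnerProductSpace ℝ V]

-- chord bound: two points at distance ≥ r from center
lemma chord_ge {r : ℝ} (hr : 0 < r) {v w : V} (hv : r ≤ ‖v‖) (hw : r ≤ ‖w‖) :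
    2 * r * Real.sin (angle v w / 2) ≤ ‖v - w‖ := by
  set θ := angle v w with hθ
  have h0 : 0 ≤ θ := angle_nonneg _ _
  have hπ : θ ≤ π := angle_le_pi _ _
  have hsin : 0 ≤ Real.sin (θ / 2) :=
    Real.sin_nonneg_of_nonneg_of_le_pi (by linarith) (by linarith [Real.pi_pos])
  have hsq : (2 * r * Real.sin (θ / 2)) ^ 2 = 2 * r ^ 2 * (1 - Real.cos θ) := by
    have := Real.sin_sq_eq_half_sub (θ / 2)
    rw [mul_div_cancel₀ θ (two_ne_zero)] at this
    nlinarith [this]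
  have hcos : ⟪v, w⟫ = Real.cos θ * (‖v‖ * ‖w‖) := (cos_angle_mul_norm_mul_norm v w).symm
  have hnrm : ‖v - w‖ ^ 2 = ‖v‖ ^ 2 - 2 * (Real.cos θ * (‖v‖ * ‖w‖)) + ‖w‖ ^ 2 := by
    rw [norm_sub_sq_real, hcos]
  have hc1 : Real.cos θ ≤ 1 := Real.cos_le_one θ
  have hle : (2 * r * Real.sin (θ / 2)) ^ 2 ≤ ‖v - w‖ ^ 2 := by
    rw [hsq, hnrm]
    nlinarith [sq_nonneg (‖v‖ - ‖w‖), mul_nonneg (sub_nonneg.2 hc1) (sub_nonneg.2 hc1),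
      mul_le_mul hv hw (le_of_lt hr) (le_trans hr.le hv)]
  have h2 : 0 ≤ 2 * r * Real.sin (θ / 2) := by positivity
  nlinarith [hle, h2, norm_nonneg (v - w)]

-- same with equality when both on the sphere
lemma chord_eq {r : ℝ} (hr : 0 < r) {v w : V} (hv : ‖v‖ = r) (hw : ‖w‖ = r) :
    ‖v - w‖ = 2 * r * Real.sin (angle v w / 2) := by
  set θ := angle v w with hθ
  have h0 : 0 ≤ θ := angle_nonneg _ _
  have hπ : θ ≤ π := angle_le_pi _ _
  have hsin : 0 ≤ Real.sin (θ / 2) :=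
    Real.sin_nonneg_of_nonneg_of_le_pi (by linarith) (by linarith [Real.pi_pos])
  have hsq : (2 * r * Real.sin (θ / 2)) ^ 2 = 2 * r ^ 2 * (1 - Real.cos θ) := by
    have := Real.sin_sq_eq_half_sub (θ / 2)
    rw [mul_div_cancel₀ θ (two_ne_zero)] at this
    nlinarith [this]
  have hcos : ⟪v, w⟫ = Real.cos θ * (‖v‖ * ‖w‖) := (cos_angle_mul_norm_mul_norm v w).symm
  have hnrm : ‖v - w‖ ^ 2 = ‖v‖ ^ 2 - 2 * (Real.cos θ * (‖v‖ * ‖w‖)) + ‖w‖ ^ 2 := by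
    rw [norm_sub_sq_real, hcos]
  have heq : ‖v - w‖ ^ 2 = (2 * r * Real.sin (θ / 2)) ^ 2 := by
    rw [hsq, hnrm, hv, hw]; ring
  have h2 : 0 ≤ 2 * r * Real.sin (θ / 2) := by positivity
  nlinarith [heq, h2, norm_nonneg (v - w)]

lemma angle_chain (v : ℕ → V) (hv : ∀ i, v i ≠ 0) :
    ∀ N, angle (v 0) (v N) ≤ ∑ i ∈ Finset.range N, angle (v i) (v (i + 1)) := by
  intro N
  induction N with
  | zero => simp [angle_self (hv 0)]
  | succ N ih =>
      rw [Finset.sum_range_succ]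
      calc angle (v 0) (v (N + 1)) ≤ angle (v 0) (v N) + angle (v N) (v (N + 1)) :=
            angle_triangle (hv 0) (hv N) (hv (N + 1))
        _ ≤ _ := by linarith

lemma div_le_div_of_nonneg_right' {a b c : ℝ} (h : a ≤ b) (hc : 0 < c) : a / c ≤ b / c := by
  gcongr

set_option maxHeartbeats 1600000 in
lemma variation_ge_of_avoids_ball {x : V} {r : ℝ} (hr : 0 < r) {p q : V} (γ : Path p q)
    (hγ : ∀ t, r ≤ dist (γ t) x) :
    ENNReal.ofReal (r * angle (p - x) (q - x)) ≤ eVariationOn (fun t => γ t) Set.univ := by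
  set E := eVariationOn (fun t => (γ t : V)) Set.univ with hE
  rcases eq_or_ne E ⊤ with hT | hT
  · rw [hT]; exact le_top
  set Vr := E.toReal with hVr
  have hVr0 : 0 ≤ Vr := ENNReal.toReal_nonneg
  set θ := angle (p - x) (q - x) with hθdef
  have hθ0 : 0 ≤ θ := angle_nonneg _ _
  have hθπ : θ ≤ π := angle_le_pi _ _
  -- main estimate for every η ∈ (0,1)
  have key : ∀ η : ℝ, 0 < η → η < 1 → r * θ * (1 - η) ≤ Vr := by
    intro η hη0 hη1
    set ε : ℝ := min r (r * Real.sqrt η) with hεdef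
    have hε0 : 0 < ε := lt_min hr (by positivity)
    -- uniform continuity of γ
    have huc : UniformContinuous (fun t : unitInterval => (γ t : V)) :=
      CompactSpace.uniformContinuous_of_continuous γ.continuous
    obtain ⟨δ, hδ0, hδ⟩ := Metric.uniformContinuous_iff.1 huc ε hε0
    obtain ⟨M, hM⟩ := exists_nat_one_div_lt hδ0
    set N : ℕ := M + 1 with hN
    have hN0 : 0 < (N : ℝ) := by positivity
    have hNδ : 1 / (N : ℝ) < δ := by exact_mod_cast hM
    -- the partition
    have humem : ∀ i : ℕ, (min i N : ℝ) / N ∈ unitInterval := by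
      intro i
      constructor
      · positivity
      · rw [div_le_one hN0]
        exact_mod_cast min_le_right i N
    set u : ℕ → unitInterval := fun i => ⟨(min i N : ℝ) / N, humem i⟩ with hu
    have humono : Monotone u := by
      intro a b hab
      simp only [hu, Subtype.mk_le_mk]
      have h1 : (min a N : ℝ) ≤ (min b N : ℝ) := by
        exact_mod_cast min_le_min hab le_rfl
      exact div_le_div_of_nonneg_right' h1 hN0
    have hsum := eVariationOn.sum_le (f := fun t : unitInterval => (γ t : V)) (n := N) humono
      (fun i => Set.mem_univ (u i))
    set d : ℕ → ℝ := fun i => dist (γ (u (i + 1))) (γ (u i)) with hd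
    have hS : ENNReal.ofReal (∑ i ∈ Finset.range N, d i) ≤ E := by
      rw [ENNReal.ofReal_sum_of_nonneg (fun i _ => dist_nonneg)]
      refine le_trans (le_of_eq (Finset.sum_congr rfl fun i _ => ?_)) hsum
      simp only [hd, edist_dist]
    have hSV : ∑ i ∈ Finset.range N, d i ≤ Vr :=
      (ENNReal.ofReal_le_iff_le_toReal hT).1 hS
    -- the partition is fine
    have hdi : ∀ i, i < N → d i ≤ ε := by
      intro i hi
      have hdist : dist (u (i + 1)) (u i) < δ := by
        rw [Subtype.dist_eq]
        simp only [hu]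
        have h1 : min (i : ℝ) (N : ℝ) = (i : ℝ) := min_eq_left (by exact_mod_cast hi.le)
        have h2 : min ((i + 1 : ℕ) : ℝ) (N : ℝ) = ((i + 1 : ℕ) : ℝ) := by
          apply min_eq_left
          exact_mod_cast hi
        rw [h1, h2, Real.dist_eq, ← sub_div, abs_div, abs_of_nonneg (le_of_lt hN0)]
        have : |((i : ℝ) + 1) - i| = 1 := by
          push_cast
          rw [add_sub_cancel_left, abs_one]
        rw [show ((i + 1 : ℕ) : ℝ) - (i : ℕ) = ((i : ℝ) + 1) - i by push_cast; ring, this]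
        exact hNδ
      exact (hδ hdist).le
    -- segment vectors
    set v : ℕ → V := fun i => γ (u i) - x with hv
    have hvnorm : ∀ i, r ≤ ‖v i‖ := by
      intro i
      rw [hv]
      calc r ≤ dist (γ (u i)) x := hγ (u i)
        _ = ‖γ (u i) - x‖ := dist_eq_norm _ _
    have hvne : ∀ i, v i ≠ 0 := by
      intro i
      intro h
      have := hvnorm i
      rw [h, norm_zero] at this
      linarith
    have hu0 : u 0 = 0 := by
      apply Subtype.ext
      simp [hu]
    have huN : u N = 1 := by
      apply Subtype.ext
      simp only [hu, min_self]
      field_simp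
      rfl
    have hv0 : v 0 = p - x := by rw [hv]; simp only [hu0]; rw [show γ 0 = p from γ.source]
    have hvN : v N = q - x := by rw [hv]; simp only [huN]; rw [show γ 1 = q from γ.target]
    -- chain of angles
    have hchain : θ ≤ ∑ i ∈ Finset.range N, angle (v i) (v (i + 1)) := by
      rw [hθdef, ← hv0, ← hvN]
      exact angle_chain v hvne N
    -- per-segment estimate
    have hseg : ∀ i, i < N → r * angle (v i) (v (i + 1)) * (1 - η) ≤ d i := by
      intro i hi
      set θi := angle (v i) (v (i + 1)) with hθi
      have hθi0 : 0 ≤ θi := angle_nonneg _ _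
      have hθiπ : θi ≤ π := angle_le_pi _ _
      have hdnn : 0 ≤ d i := dist_nonneg
      have hchord : 2 * r * Real.sin (θi / 2) ≤ d i := by
        have := chord_ge hr (hvnorm i) (hvnorm (i + 1))
        rw [← hθi] at this
        calc 2 * r * Real.sin (θi / 2) ≤ ‖v i - v (i + 1)‖ := this
          _ = dist (γ (u i)) (γ (u (i + 1))) := by
              rw [hv, dist_eq_norm]
              congr 1
              simp only [sub_sub_sub_cancel_right]
          _ = d i := dist_comm _ _
      rcases eq_or_lt_of_le hθi0 with h0 | h0
      · rw [← h0]
        simpa using hdnn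
      set β := θi / 2 with hβ
      have hβ0 : 0 < β := by rw [hβ]; linarith
      have hβπ : β ≤ π / 2 := by rw [hβ]; linarith
      have hsinβ : Real.sin β ≤ d i / (2 * r) := by
        rw [le_div_iff₀ (by positivity)]
        linarith [hchord]
      have hεr : ε ≤ r := min_le_left _ _
      have hεrη : ε ≤ r * Real.sqrt η := min_le_right _ _
      have hjordan : 2 / π * β ≤ Real.sin β := Real.mul_le_sin hβ0.le hβπ
      have hβle : β ≤ π / 2 * (d i / (2 * r)) := by
        have hπ0 := Real.pi_pos
        calc β = π / 2 * (2 / π * β) := by field_simp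
          _ ≤ π / 2 * Real.sin β := by
              apply mul_le_mul_of_nonneg_left hjordan (by positivity)
          _ ≤ π / 2 * (d i / (2 * r)) := by
              apply mul_le_mul_of_nonneg_left hsinβ (by positivity)
      have hβ1 : β ≤ 1 := by
        have : d i / (2 * r) ≤ 1 / 2 := by
          rw [div_le_div_iff₀ (by positivity) (by norm_num)]
          nlinarith [hdi i hi, hεr]
        calc β ≤ π / 2 * (d i / (2 * r)) := hβle
          _ ≤ π / 2 * (1 / 2) := by
              apply mul_le_mul_of_nonneg_left this (by positivity)
          _ ≤ 1 := by nlinarith [Real.pi_lt_d2]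
      have hβsq : β ^ 2 ≤ η := by
        have h1 : β ≤ π / 2 * (ε / (2 * r)) := by
          refine hβle.trans ?_
          apply mul_le_mul_of_nonneg_left _ (by positivity)
          apply div_le_div_of_nonneg_right' (hdi i hi) (by positivity)
        have h2 : ε / (2 * r) ≤ Real.sqrt η / 2 := by
          rw [div_le_div_iff₀ (by positivity) (by norm_num)]
          nlinarith [hεrη]
        have h3 : β ≤ π * Real.sqrt η / 4 := by
          calc β ≤ π / 2 * (ε / (2 * r)) := h1
            _ ≤ π / 2 * (Real.sqrt η / 2) := by
                apply mul_le_mul_of_nonneg_left h2 (by positivity)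
            _ = π * Real.sqrt η / 4 := by ring
        have h4 : Real.sqrt η ^ 2 = η := Real.sq_sqrt hη0.le
        have h5 : β ≤ Real.sqrt η := by
          have h6 : π * Real.sqrt η ≤ 3.15 * Real.sqrt η :=
            mul_le_mul_of_nonneg_right (le_of_lt Real.pi_lt_d2) (Real.sqrt_nonneg η)
          nlinarith [h3, Real.sqrt_nonneg η]
        nlinarith [h5, hβ0, h4]
      have hcube : β - β ^ 3 / 4 < Real.sin β := by
        have h := Real.sin_gt_sub_cube hβ0
        nlinarith [h, pow_pos hβ0 3]
      have hsinlb : β * (1 - η) ≤ Real.sin β := by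
        nlinarith [hβ0, hβsq, hcube]
      calc r * θi * (1 - η) = 2 * r * (β * (1 - η)) := by rw [hβ]; ring
        _ ≤ 2 * r * Real.sin β := by
            apply mul_le_mul_of_nonneg_left hsinlb (by positivity)
        _ ≤ d i := hchord
    -- sum up
    calc r * θ * (1 - η)
        ≤ r * (∑ i ∈ Finset.range N, angle (v i) (v (i + 1))) * (1 - η) := by
          apply mul_le_mul_of_nonneg_right _ (by linarith)
          apply mul_le_mul_of_nonneg_left hchain hr.le
      _ = ∑ i ∈ Finset.range N, r * angle (v i) (v (i + 1)) * (1 - η) := by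
          rw [Finset.mul_sum, Finset.sum_mul]
      _ ≤ ∑ i ∈ Finset.range N, d i := by
          apply Finset.sum_le_sum
          intro i hi
          exact hseg i (Finset.mem_range.1 hi)
      _ ≤ Vr := hSV
  -- conclude r * θ ≤ Vr
  have hfin : r * θ ≤ Vr := by
    by_contra hcon
    push_neg at hcon
    have hrθ : 0 < r * θ := lt_of_le_of_lt hVr0 hcon
    set η := (r * θ - Vr) / (2 * (r * θ)) with hη
    have hη0 : 0 < η := div_pos (by linarith) (by positivity)
    have hη1 : η < 1 := by
      rw [hη, div_lt_one (by positivity)]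
      linarith
    have := key η hη0 hη1
    have : r * θ * (1 - η) = (r * θ + Vr) / 2 := by
      rw [hη]
      have h2 : r * θ * ((r * θ - Vr) / (2 * (r * θ))) = (r * θ - Vr) / 2 := by
        rw [mul_div_assoc', mul_comm 2 (r * θ), mul_div_mul_left _ _ hrθ.ne']
      rw [mul_sub, mul_one, h2]; ring
    nlinarith [key η hη0 hη1]
  calc ENNReal.ofReal (r * θ) ≤ ENNReal.ofReal Vr := ENNReal.ofReal_le_ofReal hfin
    _ ≤ E := by
      rw [hVr, ENNReal.ofReal_toReal hT]

end Aux

set_option maxHeartbeats 2000000 in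
theorem stmt11 {n : ℕ} (A : Set (EuclideanSpace ℝ (Fin n))) (hA : IsClosed A)
    (hpc : IsPathConnected A)
    (hbdd : ∃ x ∈ Aᶜ, Bornology.IsBounded (connectedComponentIn Aᶜ x)) :
    ENNReal.ofReal (Real.pi / (2 * Real.sqrt 2)) ≤ distortion A := by
  classical
  obtain ⟨x₀, hx₀c, hb⟩ := hbdd
  obtain ⟨b₀, hb₀A, -⟩ := hpc
  have hAne : A.Nonempty := ⟨b₀, hb₀A⟩
  set U := connectedComponentIn Aᶜ x₀ with hU
  have hx₀U : x₀ ∈ U := mem_connectedComponentIn hx₀c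
  have hKc : IsCompact (closure U) := hb.isCompact_closure
  obtain ⟨x, hxK, hxmax'⟩ := hKc.exists_isMaxOn ⟨x₀, subset_closure hx₀U⟩
    ((Metric.continuous_infDist_pt A).continuousOn)
  have hxmax : ∀ y ∈ closure U, Metric.infDist y A ≤ Metric.infDist x A :=
    fun y hy => hxmax' hy
  set r := Metric.infDist x A with hrdef
  have hx₀pos : 0 < Metric.infDist x₀ A := (hA.notMem_iff_infDist_pos hAne).1 hx₀c
  have hrpos : 0 < r := lt_of_lt_of_le hx₀pos (hxmax x₀ (subset_closure hx₀U))
  have hxA : x ∉ A := by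
    intro h
    have := Metric.infDist_zero_of_mem h
    rw [← hrdef] at this
    linarith
  have hdistA : ∀ a ∈ A, r ≤ dist x a := fun a ha => Metric.infDist_le_dist_of_mem ha
  -- x belongs to U
  have hccx : connectedComponentIn Aᶜ x = U := by
    have hop : IsOpen (connectedComponentIn Aᶜ x) := hA.isOpen_compl.connectedComponentIn
    have hnb : connectedComponentIn Aᶜ x ∈ nhds x :=
      hop.mem_nhds (mem_connectedComponentIn hxA)
    obtain ⟨y, hy1, hy2⟩ := mem_closure_iff_nhds.1 hxK _ hnb
    have e1 := connectedComponentIn_eq hy1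
    have e2 := connectedComponentIn_eq hy2
    rw [hU, e2, e1]
  -- ball property
  have hball : ∀ y, dist y x < r → Metric.infDist y A ≤ r := by
    intro y hy
    have hsub : Metric.ball x r ⊆ Aᶜ := by
      intro z hz hzA
      have := hdistA z hzA
      rw [Metric.mem_ball, dist_comm] at hz
      linarith
    have hBU : Metric.ball x r ⊆ U := by
      rw [← hccx]
      exact (convex_ball x r).isPreconnected.subset_connectedComponentIn
        (Metric.mem_ball_self hrpos) hsub
    exact hxmax y (subset_closure (hBU (Metric.mem_ball.2 hy)))
  -- first touch point
  obtain ⟨p, hpA, hpd⟩ := hA.exists_infDist_eq_dist hAne x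
  have hpdist : dist x p = r := hpd.symm
  -- second touch point via compactness
  set c : ℝ := r + 1 with hc
  have hc0 : 0 < c := by linarith
  set ε : ℕ → ℝ := fun k => 1 / (k + 2) with hε
  have hε0 : ∀ k, 0 < ε k := by intro k; positivity
  have hε1 : ∀ k, ε k < 1 := by
    intro k
    rw [hε]
    rw [div_lt_one (by positivity)]
    have : (0:ℝ) ≤ (k:ℝ) := Nat.cast_nonneg k
    linarith
  have hεanti : ∀ k, ε (k + 1) ≤ ε k := by
    intro k
    apply one_div_le_one_div_of_le (by positivity)
    push_cast
    linarith
  set S : ℕ → Set (EuclideanSpace ℝ (Fin n)) := fun k =>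
    {a | a ∈ A ∧ dist a x ≤ r + c * ε k ∧ ⟪a - x, p - x⟫ ≤ c * ε k} with hS
  have hSclosed : ∀ k, IsClosed (S k) := by
    intro k
    have h1 : IsClosed {a : EuclideanSpace ℝ (Fin n) | dist a x ≤ r + c * ε k} :=
      isClosed_le (continuous_id.dist continuous_const) continuous_const
    have h2 : IsClosed {a : EuclideanSpace ℝ (Fin n) | ⟪a - x, p - x⟫ ≤ c * ε k} :=
      isClosed_le (Continuous.inner (continuous_id.sub continuous_const) continuous_const)
        continuous_const
    exact hA.inter (h1.inter h2)
  have hpx : ‖p - x‖ = r := by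
    rw [← dist_eq_norm, dist_comm]
    exact hpdist
  have hpxne : p - x ≠ 0 := by
    intro h
    rw [h, norm_zero] at hpx
    linarith
  have hSne : ∀ k, (S k).Nonempty := by
    intro k
    set e := ε k with he
    have he0 : 0 < e := hε0 k
    have he1 : e < 1 := hε1 k
    set y := x - e • (p - x) with hy
    have hyxv : y - x = -(e • (p - x)) := by rw [hy]; abel
    have hyxd : dist y x = e * r := by
      rw [dist_eq_norm, hyxv, norm_neg, norm_smul, Real.norm_eq_abs, abs_of_pos he0, hpx]
    have hyx : dist y x < r := by rw [hyxd]; nlinarith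
    have hinf : Metric.infDist y A < r + e ^ 2 :=
      lt_of_le_of_lt (hball y hyx) (by nlinarith)
    obtain ⟨a, haA, had⟩ := (Metric.infDist_lt_iff hAne).1 hinf
    refine ⟨a, haA, ?_, ?_⟩
    · have htri : dist a x ≤ dist a y + dist y x := dist_triangle a y x
      rw [dist_comm a y] at htri
      rw [hc, ← he]
      nlinarith [htri, had, hyxd, he0, he1]
    · set v := a - x with hv
      have hva : a - y = v + e • (p - x) := by rw [hv, hy]; abel
      have hnv : r ≤ ‖v‖ := by
        rw [hv, norm_sub_rev, ← dist_eq_norm]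
        exact hdistA a haA
      have hexp : ‖v + e • (p - x)‖ ^ 2 = ‖v‖ ^ 2 + 2 * (e * ⟪v, p - x⟫) + e ^ 2 * r ^ 2 := by
        rw [norm_add_sq_real, real_inner_smul_right, norm_smul, Real.norm_eq_abs,
          abs_of_pos he0, hpx]
        ring
      have hlt : ‖v + e • (p - x)‖ < r + e ^ 2 := by
        rw [← hva, ← dist_eq_norm, dist_comm]
        exact had
      have hlt2 : ‖v + e • (p - x)‖ ^ 2 < (r + e ^ 2) ^ 2 := by
        nlinarith [norm_nonneg (v + e • (p - x)), hlt, hrpos, he0]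
      have hnv2 : r ^ 2 ≤ ‖v‖ ^ 2 := by nlinarith [hnv, hrpos]
      have hkey : 2 * (e * ⟪v, p - x⟫) < 2 * r * e ^ 2 + e ^ 4 - e ^ 2 * r ^ 2 := by
        nlinarith [hexp, hlt2, hnv2]
      rw [hc, ← he]
      by_contra hcon
      push_neg at hcon
      have h2e : 0 < 2 * e := by linarith
      have hmul : 2 * e * ((r + 1) * e) < 2 * e * ⟪v, p - x⟫ :=
        mul_lt_mul_of_pos_left hcon h2e
      have h1e : e ^ 2 ≤ 1 := by nlinarith [he0, he1]
      have he4 : e ^ 4 ≤ e ^ 2 := by nlinarith [mul_nonneg (sub_nonneg.2 h1e) (sq_nonneg e)]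
      nlinarith [hkey, hmul, he4, sq_nonneg r, mul_pos he0 he0, sq_nonneg (e * r)]
  have hSanti : ∀ k, S (k + 1) ⊆ S k := by
    intro k a ⟨h1, h2, h3⟩
    refine ⟨h1, le_trans h2 ?_, le_trans h3 ?_⟩
    · have := hεanti k; nlinarith
    · have := hεanti k; nlinarith
  have hScompact : IsCompact (S 0) := by
    apply (isCompact_closedBall x (r + c * ε 0)).of_isClosed_subset (hSclosed 0)
    intro a ⟨_, h2, _⟩
    exact Metric.mem_closedBall.2 h2
  obtain ⟨q, hq⟩ := IsCompact.nonempty_iInter_of_sequence_nonempty_isCompact_isClosed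
    S hSanti hSne hScompact hSclosed
  simp only [Set.mem_iInter] at hq
  have hqA : q ∈ A := (hq 0).1
  have hqdist : dist q x = r := by
    have hge : r ≤ dist q x := by rw [dist_comm]; exact hdistA q hqA
    have hle : dist q x ≤ r := by
      by_contra hcon
      push_neg at hcon
      obtain ⟨k, hk⟩ := exists_nat_one_div_lt (div_pos (sub_pos.2 hcon) hc0)
      have h2 := (hq k).2.1
      have hεk : ε k ≤ 1 / (k + 1) := by
        rw [hε]
        apply div_le_div_of_nonneg_left one_pos.le (by positivity) (by push_cast; linarith)
      have : c * ε k < dist q x - r := by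
        calc c * ε k ≤ c * (1 / (k + 1)) := by nlinarith
          _ < c * ((dist q x - r) / c) := by
              apply mul_lt_mul_of_pos_left hk hc0
          _ = dist q x - r := by field_simp
      linarith
    linarith
  have hqinner : ⟪q - x, p - x⟫ ≤ 0 := by
    by_contra hcon
    push_neg at hcon
    obtain ⟨k, hk⟩ := exists_nat_one_div_lt (div_pos hcon hc0)
    have h3 := (hq k).2.2
    have hεk : ε k ≤ 1 / (k + 1) := by
      rw [hε]
      apply div_le_div_of_nonneg_left one_pos.le (by positivity) (by push_cast; linarith)
    have : c * ε k < ⟪q - x, p - x⟫ := by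
      calc c * ε k ≤ c * (1 / (k + 1)) := by nlinarith
        _ < c * (⟪q - x, p - x⟫ / c) := mul_lt_mul_of_pos_left hk hc0
        _ = ⟪q - x, p - x⟫ := by field_simp
    linarith
  -- touch points give angle ≥ π/2
  have hqx : ‖q - x‖ = r := by rw [← dist_eq_norm]; exact hqdist
  set θ := InnerProductGeometry.angle (p - x) (q - x) with hθ
  have hθ0 : 0 ≤ θ := InnerProductGeometry.angle_nonneg _ _
  have hθπ : θ ≤ Real.pi := InnerProductGeometry.angle_le_pi _ _
  have hcosle : Real.cos θ ≤ 0 := by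
    rw [hθ, InnerProductGeometry.cos_angle]
    apply div_nonpos_of_nonpos_of_nonneg
    · rw [real_inner_comm]
      exact hqinner
    · positivity
  have hθge : Real.pi / 2 ≤ θ := by
    by_contra hcon
    push_neg at hcon
    have : 0 < Real.cos θ :=
      Real.cos_pos_of_mem_Ioo ⟨by linarith [Real.pi_pos], hcon⟩
    linarith
  have hsinpos : 0 < Real.sin (θ / 2) :=
    Real.sin_pos_of_pos_of_lt_pi (by linarith [Real.pi_pos]) (by linarith [Real.pi_pos])
  set d := dist p q with hd
  have hdeq : d = 2 * r * Real.sin (θ / 2) := by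
    have h := chord_eq hrpos hpx hqx
    rw [hd, dist_eq_norm]
    calc ‖p - q‖ = ‖(p - x) - (q - x)‖ := by congr 1; abel
      _ = 2 * r * Real.sin (θ / 2) := by rw [h, ← hθ]
  have hd0 : 0 < d := by
    rw [hdeq, mul_assoc]
    exact mul_pos two_pos (mul_pos hrpos hsinpos)
  -- the key real inequality
  have hratio : Real.pi / (2 * Real.sqrt 2) ≤ (r * θ) / d := by
    set uu := θ / 2 with huu
    have hpipos := Real.pi_pos
    have huu1 : Real.pi / 4 ≤ uu := by rw [huu]; linarith
    have huu2 : uu ≤ Real.pi / 2 := by rw [huu]; linarith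
    have huupos : 0 < uu := lt_of_lt_of_le (by linarith) huu1
    set lam := (Real.pi / 4) / uu with hlam
    have hlam0 : 0 ≤ lam := by positivity
    have hlam1 : lam ≤ 1 := by
      rw [hlam, div_le_one huupos]
      exact huu1
    have hlamuu : lam * uu = Real.pi / 4 := by
      rw [hlam]
      field_simp
    have hconc := strictConcaveOn_sin_Icc.concaveOn.2 (x := uu) (y := 0)
      ⟨huupos.le, by linarith⟩ ⟨le_refl 0, hpipos.le⟩ hlam0 (by linarith : (0:ℝ) ≤ 1 - lam)
      (by ring)
    simp only [smul_eq_mul, mul_zero, Real.sin_zero, add_zero] at hconc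
    rw [hlamuu, Real.sin_pi_div_four] at hconc
    -- hconc : lam * sin uu ≤ √2 / 2
    have hchordal : Real.pi / 4 * Real.sin uu ≤ Real.sqrt 2 / 2 * uu := by
      have := mul_le_mul_of_nonneg_right hconc huupos.le
      calc Real.pi / 4 * Real.sin uu = lam * uu * Real.sin uu := by rw [hlamuu]
        _ = lam * Real.sin uu * uu := by ring
        _ ≤ Real.sqrt 2 / 2 * uu := this
    have hrd : (r * θ) / d = uu / Real.sin uu := by
      rw [hdeq, huu]
      rw [show r * θ = 2 * r * (θ / 2) by ring]
      rw [mul_div_mul_left _ _ (by positivity : (2:ℝ) * r ≠ 0)]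
    rw [hrd, div_le_div_iff₀ (by positivity) (by rw [huu] at hsinpos ⊢; exact hsinpos)]
    have hs2 : 0 < Real.sqrt 2 := by positivity
    have hs2' : Real.sqrt 2 * Real.sqrt 2 = 2 := Real.mul_self_sqrt (by norm_num)
    nlinarith [hchordal, huupos, hs2]
  -- assembling in ℝ≥0∞
  have hintr : ENNReal.ofReal (r * θ) ≤ intrinsicDist A p q := by
    rw [intrinsicDist]
    refine le_iInf fun γ => le_iInf fun hrange => ?_
    have hmem : ∀ t, r ≤ dist (γ t) x := by
      intro t
      have : γ t ∈ A := hrange ⟨t, rfl⟩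
      rw [dist_comm]
      exact hdistA _ this
    exact variation_ge_of_avoids_ball hrpos γ hmem
  have hterm : ENNReal.ofReal (Real.pi / (2 * Real.sqrt 2)) ≤
      intrinsicDist A p q / edist p q := by
    calc ENNReal.ofReal (Real.pi / (2 * Real.sqrt 2))
        ≤ ENNReal.ofReal ((r * θ) / d) := ENNReal.ofReal_le_ofReal hratio
      _ = ENNReal.ofReal (r * θ) / ENNReal.ofReal d := ENNReal.ofReal_div_of_pos hd0
      _ ≤ intrinsicDist A p q / ENNReal.ofReal d := by
          exact ENNReal.div_le_div_right hintr _
      _ = intrinsicDist A p q / edist p q := by rw [edist_dist]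
  refine le_trans hterm ?_
  rw [distortion]
  calc intrinsicDist A p q / edist p q
      ≤ ⨆ q' ∈ A, intrinsicDist A p q' / edist p q' :=
        le_biSup (f := fun q' => intrinsicDist A p q' / edist p q') hqA
    _ ≤ ⨆ p' ∈ A, ⨆ q' ∈ A, intrinsicDist A p' q' / edist p' q' :=
        le_biSup (f := fun p' => ⨆ q' ∈ A, intrinsicDist A p' q' / edist p' q') hpA
end
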